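/- Let l ∈ ℝ, κ > 0, m ∈ ℝ, let g be the de Sitter metric on ℝ⁴ and K = diag(0, e^{2lt}, e^{2lt}, e^{2lt}). The vector field Υ₀ whose only nonzero component is Υ₀^t(t) = e^{lt/2}(1 + (m²/κ)e^{lt})^{−1/2} satisfies (L_{Υ₀} g)_{μν} = 2Ω(g_{μν} + (m²/κ)K_{μν}) at every point, with Ω(t) = (l/2)·e^{lt/2}·(1 + (m²/κ)e^{lt})^{−3/2}. -/

import Mathlib

/-- Partial derivative of a scalar function on ℝ^N in the i-th coordinate direction. -/
noncomputable def pd {N : ℕ} (f : (Fin N → ℝ) → ℝ) (i : Fin N) (x : Fin N → ℝ) : ℝ :=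
  fderiv ℝ f x (Pi.single i 1)

/-- Lie derivative of a covariant 2-tensor field `T` along the vector field `V`. -/
noncomputable def lieD {N : ℕ} (V : (Fin N → ℝ) → Fin N → ℝ)
    (T : (Fin N → ℝ) → Fin N → Fin N → ℝ) (x : Fin N → ℝ) (μ ν : Fin N) : ℝ :=
  ∑ σ, (V x σ * pd (fun y => T y μ ν) σ x
    + T x σ ν * pd (fun y => V y σ) μ x
    + T x μ σ * pd (fun y => V y σ) ν x)

/-- de Sitter metric g = diag(−1, e^{lt}, e^{lt}, e^{lt}) on ℝ⁴, coordinate 0 being t. -/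
noncomputable def dsMetric (l : ℝ) (x : Fin 4 → ℝ) (μ ν : Fin 4) : ℝ :=
  if μ = ν then (if μ = 0 then -1 else Real.exp (l * x 0)) else 0

/-- The Killing tensor K = diag(0, e^{2lt}, e^{2lt}, e^{2lt}) of the de Sitter metric. -/
noncomputable def dsK (l : ℝ) (x : Fin 4 → ℝ) (μ ν : Fin 4) : ℝ :=
  if μ = ν ∧ μ ≠ 0 then Real.exp (2 * l * x 0) else 0

/-!
Υ₀ = f(t) ∂_t and g is diagonal with entries depending on t alone, so L_{Υ₀} g is diagonal with
(L g)₀₀ = -2 f' and (L g)ᵢᵢ = f · l e^{lt}. With u = 1 + (m²/κ) e^{lt}, the profile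
f = e^{lt/2} u^{-1/2} has f' = (l/2) e^{lt/2} u^{-3/2} = Ω because u - (m²/κ) e^{lt} = 1, and
f · l e^{lt} = 2Ω e^{lt} u = 2Ω (e^{lt} + (m²/κ) e^{2lt}).
-/

open Real

lemma pd_comp_apply {N : ℕ} {f : ℝ → ℝ} {d : ℝ} {x : Fin N → ℝ} {j : Fin N}
    (hf : HasDerivAt f d (x j)) (i : Fin N) :
    pd (fun y => f (y j)) i x = if i = j then d else 0 := by
  have h : HasFDerivAt (fun y : Fin N → ℝ => f (y j)) (d • ContinuousLinearMap.proj j) x :=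
    hf.comp_hasFDerivAt x (hasFDerivAt_apply (𝕜 := ℝ) j x)
  simp [pd, h.fderiv, Pi.single_apply, @eq_comm _ j]

lemma lieD_timeField_diagonal {N : ℕ} {f : ℝ → ℝ} {a : Fin (N + 1) → ℝ → ℝ} {df : ℝ}
    {da : Fin (N + 1) → ℝ} {x : Fin (N + 1) → ℝ} (hf : HasDerivAt f df (x 0))
    (ha : ∀ μ, HasDerivAt (a μ) (da μ) (x 0)) (μ ν : Fin (N + 1)) :
    lieD (fun y σ => if σ = 0 then f (y 0) else 0) (fun y μ ν => if μ = ν then a μ (y 0) else 0)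
        x μ ν
      = if μ = ν then f (x 0) * da μ + (if μ = 0 then 2 * a μ (x 0) * df else 0) else 0 := by
  have hV : ∀ (σ : Fin (N + 1)) i, pd (fun y => if σ = 0 then f (y 0) else 0) i x
      = if σ = 0 ∧ i = 0 then df else 0 := by
    intro σ i
    by_cases hσ : σ = 0
    · simp [hσ, pd_comp_apply hf]
    · simp [hσ, pd]
  have hT : ∀ i, pd (fun y => if μ = ν then a μ (y 0) else 0) i x
      = if μ = ν ∧ i = 0 then da μ else 0 := by
    intro i
    by_cases hμν : μ = ν
    · simp [hμν, pd_comp_apply (ha ν)]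
    · simp [hμν, pd]
  simp only [lieD]
  simp only [hV, hT]
  rw [Fintype.sum_eq_single 0 fun σ hσ => by simp [hσ]]
  rcases eq_or_ne μ ν with rfl | hμν
  · rcases eq_or_ne μ 0 with rfl | hμ
    · simp
      ring
    · simp [hμ]
  · rcases eq_or_ne μ 0 with rfl | hμ
    · simp [hμν, hμν.symm]
    · simp [hμν, hμ]

lemma rpow_neg_half_eq_mul_rpow_neg_three_halves {u : ℝ} (hu : 0 < u) :
    u ^ (-(1 / 2) : ℝ) = u * u ^ (-(3 / 2) : ℝ) := by
  rw [show (-(1 / 2) : ℝ) = 1 + -(3 / 2) by norm_num, rpow_add hu, rpow_one]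

lemma hasDerivAt_exp_mul (l t : ℝ) : HasDerivAt (fun s => exp (l * s)) (l * exp (l * t)) t := by
  simpa [mul_comm] using ((hasDerivAt_id t).const_mul l).exp

lemma hasDerivAt_timeProfile {l c t : ℝ} (hu : 0 < 1 + c * exp (l * t)) :
    HasDerivAt (fun s => exp (l * s / 2) * (1 + c * exp (l * s)) ^ (-(1 / 2) : ℝ))
      (l / 2 * exp (l * t / 2) * (1 + c * exp (l * t)) ^ (-(3 / 2) : ℝ)) t := by
  have hhalf : HasDerivAt (fun s => exp (l * s / 2)) (l / 2 * exp (l * t / 2)) t := by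
    simpa [mul_div_right_comm] using hasDerivAt_exp_mul (l / 2) t
  have hpow := (((hasDerivAt_exp_mul l t).const_mul c).const_add 1).rpow_const
    (p := -(1 / 2)) (Or.inl hu.ne')
  refine (hhalf.mul hpow).congr_deriv ?_
  rw [show (-(1 / 2) : ℝ) - 1 = -(3 / 2) by norm_num, rpow_neg_half_eq_mul_rpow_neg_three_halves hu]
  ring

theorem stmt9 (l κ₀ m : ℝ) (hκ : 0 < κ₀)
    (Υ₀ : (Fin 4 → ℝ) → Fin 4 → ℝ)
    (hΥ₀ : Υ₀ = fun x μ => if μ = 0 then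
        Real.exp (l * x 0 / 2) * (1 + m ^ 2 / κ₀ * Real.exp (l * x 0)) ^ (-(1 / 2) : ℝ)
      else 0)
    (Ω : ℝ → ℝ)
    (hΩ : Ω = fun t =>
      (l / 2) * Real.exp (l * t / 2) * (1 + m ^ 2 / κ₀ * Real.exp (l * t)) ^ (-(3 / 2) : ℝ)) :
    ∀ x : Fin 4 → ℝ, ∀ μ ν : Fin 4,
      lieD Υ₀ (dsMetric l) x μ ν
        = 2 * Ω (x 0) * (dsMetric l x μ ν + m ^ 2 / κ₀ * dsK l x μ ν) := by
  subst hΥ₀ hΩ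
  intro x μ ν
  have hu : 0 < 1 + m ^ 2 / κ₀ * exp (l * x 0) := by positivity
  have hg : ∀ μ : Fin 4, HasDerivAt (fun t => if μ = 0 then -1 else exp (l * t))
      (if μ = 0 then 0 else l * exp (l * x 0)) (x 0) := by
    intro μ
    split_ifs
    · exact hasDerivAt_const _ _
    · exact hasDerivAt_exp_mul l (x 0)
  refine (lieD_timeField_diagonal (hasDerivAt_timeProfile hu) hg μ ν).trans ?_
  have hexp : exp (2 * l * x 0) = exp (l * x 0) * exp (l * x 0) := by
    rw [← exp_add]; ring_nf
  rw [rpow_neg_half_eq_mul_rpow_neg_three_halves hu]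
  rcases eq_or_ne μ ν with rfl | hμν
  · rcases eq_or_ne μ 0 with rfl | hμ
    · simp [dsMetric, dsK]
    · simp [dsMetric, dsK, hμ, hexp]
      ring
  · simp [dsMetric, dsK, hμν]
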